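/- arXiv:1901.10432 — 2 statements merged into one kernel-verified Lean document; each statement's English description precedes it below -/
import Mathlib

section
/- Let X be an infinite ℤ²-subshift and let P be a convex integer polygon. If for every vertex w of P the sector based at w is corner coding for X, then for all sufficiently large positive integers n the dilated polygon n·P is a coding polygon for X. Conversely, if P is a coding polygon for X, then for every vertex w of P the sector based at w is corner coding for X. -/
namespace PolygonalShifts

abbrev Z2 : Type := ℤ × ℤ

abbrev Config (A : Type*) : Type _ := Z2 → A

/-- The translation action of `ℤ²` on configurations. -/
def shiftAct {A : Type*} (u : Z2) (x : Config A) : Config A := fun w => x (u + w)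

/-- A `ℤ²`-subshift: a closed (for the product topology, with the alphabet discrete)
and translation-invariant set of configurations. -/
def IsSubshift {A : Type*} (X : Set (Config A)) : Prop :=
  (letI : TopologicalSpace A := ⊥
   IsClosed X) ∧
  ∀ u : Z2, ∀ x ∈ X, shiftAct u x ∈ X

/-- The canonical embedding `ℤ² → ℝ²`. -/
def toR2 (p : Z2) : ℝ × ℝ := ((p.1 : ℝ), (p.2 : ℝ))

/-- `S` X-codes `S'`, for subsets `S, S'` of `ℝ²`. -/
def Codes {A : Type*} (X : Set (Config A)) (S S' : Set (ℝ × ℝ)) : Prop :=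
  ∀ x ∈ X, ∀ x' ∈ X,
    (∀ p : Z2, toR2 p ∈ S → x p = x' p) →
    ∀ p : Z2, toR2 p ∈ S' → x p = x' p

/-- `S` X-codes `S'`, for subsets `S, S'` of `ℤ²`. -/
def CodesZ {A : Type*} (X : Set (Config A)) (S S' : Set Z2) : Prop :=
  ∀ x ∈ X, ∀ x' ∈ X, (∀ p ∈ S, x p = x' p) → ∀ p ∈ S', x p = x' p

/-- `Y` is a recoding of `X` via the finite set `F ⊆ ℤ²`. -/
def IsRecodingVia {A A' : Type*} (X : Set (Config A)) (Y : Set (Config A'))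
    (F : Set Z2) : Prop :=
  letI : TopologicalSpace A := ⊥
  letI : TopologicalSpace A' := ⊥
  ∃ Ψ : X ≃ₜ Y,
    (∀ (u : Z2) (x x' : X), (x' : Config A) = shiftAct u (x : Config A) →
      (↑(Ψ x') : Config A') = shiftAct u (↑(Ψ x) : Config A')) ∧
    (∀ (u : Z2) (x x' : X),
      (↑(Ψ x) : Config A') u = (↑(Ψ x') : Config A') u ↔
        ∀ f ∈ F, (x : Config A) (f + u) = (x' : Config A) (f + u))

/-- `Y` is a recoding of `X`. -/
def IsRecoding {A A' : Type*} (X : Set (Config A)) (Y : Set (Config A')) : Prop :=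
  ∃ F : Set Z2, F.Finite ∧ IsRecodingVia X Y F

/-- Integer cross product. -/
def crossZ (u v : Z2) : ℤ := u.1 * v.2 - u.2 * v.1

/-- Real cross product. -/
def crossR (u v : ℝ × ℝ) : ℝ := u.1 * v.2 - u.2 * v.1

/-- A convex integer polygon, given by its (at least three) vertices listed in
counterclockwise order: every vertex lies strictly to the left of every directed edge. -/
structure IntPolygon where
  n : ℕ
  vert : Fin (n + 3) → Z2
  convex : ∀ i j : Fin (n + 3), j ≠ i → j ≠ i + 1 →
    0 < crossZ (vert (i + 1) - vert i) (vert j - vert i)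

namespace IntPolygon

/-- The oriented edge vector from vertex `i` to vertex `i+1`. -/
def edgeVec (P : IntPolygon) (i : Fin (P.n + 3)) : Z2 := P.vert (i + 1) - P.vert i

/-- The polygon as a subset of `ℝ²` (the convex hull of its vertices). -/
def carrier (P : IntPolygon) : Set (ℝ × ℝ) :=
  convexHull ℝ (Set.range fun i => toR2 (P.vert i))

lemma crossZ_smul (m : ℤ) (u v : Z2) : crossZ (m • u) (m • v) = m ^ 2 * crossZ u v := by
  simp only [crossZ, Prod.smul_fst, Prod.smul_snd, smul_eq_mul]
  ring

/-- The dilation of a polygon by a positive integer factor about the origin. -/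
def dilate (P : IntPolygon) (m : ℤ) (hm : 0 < m) : IntPolygon where
  n := P.n
  vert := fun i => m • P.vert i
  convex := by
    intro i j hj hj1
    have h := P.convex i j hj hj1
    have e1 : m • P.vert (i + 1) - m • P.vert i = m • (P.vert (i + 1) - P.vert i) :=
      (smul_sub m _ _).symm
    have e2 : m • P.vert j - m • P.vert i = m • (P.vert j - P.vert i) :=
      (smul_sub m _ _).symm
    rw [e1, e2, crossZ_smul]
    exact mul_pos (pow_pos hm 2) h

end IntPolygon

/-- `P` is a coding polygon for `X`: for each vertex `w`, the polygon with `w`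
removed X-codes `w`. -/
def IsCodingPolygon {A : Type*} (X : Set (Config A)) (P : IntPolygon) : Prop :=
  ∀ i : Fin (P.n + 3),
    Codes X (P.carrier \ {toR2 (P.vert i)}) {toR2 (P.vert i)}

/-- `X` is polygonal with respect to `P`. -/
def Polygonal {A : Type*} (X : Set (Config A)) (P : IntPolygon) : Prop :=
  X.Infinite ∧ IsCodingPolygon X P

/-- The closed half plane `H_v = {w : v₁ w₂ − v₂ w₁ ≥ 0}` to the left of the direction `v`. -/
def leftHalfPlane (v : ℝ × ℝ) : Set (ℝ × ℝ) := {w | 0 ≤ v.1 * w.2 - v.2 * w.1}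

/-- The ray directed by `v` is expansive for `X`: `H_v` X-codes all of `ℝ²`. -/
def ExpansiveRay {A : Type*} (X : Set (Config A)) (v : ℝ × ℝ) : Prop :=
  Codes X (leftHalfPlane v) Set.univ

/-- For a primitive integer direction `v`, the line `L₀`: the translate of `L = ℝ·v`
by an integer vector, lying outside `H_v` and closest to `L`. -/
def lineL0 (v : Z2) : Set (ℝ × ℝ) := {w | (v.1 : ℝ) * w.2 - (v.2 : ℝ) * w.1 = -1}

/-- A block of `m` consecutive lattice points on `L₀`, starting at `z`. -/
def blockOn (v z : Z2) (m : ℕ) : Set (ℝ × ℝ) :=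
  (fun k : ℕ => toR2 (z + (k : ℤ) • v)) '' {k | k < m}

/-- The (nonexpansive) rational ray directed by the primitive vector `v` is closing for `X`. -/
def ClosingRay {A : Type*} (X : Set (Config A)) (v : Z2) : Prop :=
  ∃ N : ℕ, ∀ z : Z2, v.1 * z.2 - v.2 * z.1 = -1 →
    ∀ m : ℕ, N ≤ m →
      Codes X (leftHalfPlane (toR2 v) ∪ blockOn v z m) (lineL0 v)

/-- The sector (with vertex the origin) determined by the rays through `e₁` and `e₂`:
lattice points on either ray or strictly between them. -/
def SectorZ (e₁ e₂ : Z2) : Set Z2 :=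
  {p | SameRay ℝ (toR2 e₁) (toR2 p) ∨ SameRay ℝ (toR2 e₂) (toR2 p) ∨
       (0 < crossZ e₁ p ∧ 0 < crossZ p e₂)}

/-- The rational sector determined by `(e₁, e₂)` is corner coding for `X`. -/
def IsCornerCoding {A : Type*} (X : Set (Config A)) (e₁ e₂ : Z2) : Prop :=
  CodesZ X (SectorZ e₁ e₂ \ {0}) {0}

/-- The rational sector determined by `(e₁, e₂)` is weakly corner coding for `X`. -/
def IsWeaklyCornerCoding {A : Type*} (X : Set (Config A)) (e₁ e₂ : Z2) : Prop :=
  ∃ F₀ : Set Z2, F₀.Finite ∧ F₀ ⊆ SectorZ e₁ e₂ ∧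
    ∀ F : Set Z2, F.Finite → F ⊆ SectorZ e₁ e₂ →
      CodesZ X (SectorZ e₁ e₂ \ F) (SectorZ e₁ e₂ \ F₀)

/-- The sector based at the vertex `i` of the polygon `P`: lattice points in the convex
cone with apex `P.vert i` spanned by the two edges of `P` incident to that vertex. -/
def vertexSector (P : IntPolygon) (i : Fin (P.n + 3)) : Set Z2 :=
  {p | ∃ s t : ℝ, 0 ≤ s ∧ 0 ≤ t ∧
    toR2 p = toR2 (P.vert i) + s • toR2 (P.vert (i - 1) - P.vert i)
      + t • toR2 (P.vert (i + 1) - P.vert i)}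

/-- `P` is a coding polygon for some recoding of `X`. -/
def HasRecodingPolygon {A : Type*} (X : Set (Config A)) (P : IntPolygon) : Prop :=
  ∃ (A' : Type) (_ : Fintype A') (Y : Set (Config A')),
    IsSubshift Y ∧ IsRecoding X Y ∧ IsCodingPolygon Y P

/-- `P` is a minimal recoding polygon for `X`. -/
def IsMinimalRecodingPolygon {A : Type*} (X : Set (Config A)) (P : IntPolygon) : Prop :=
  HasRecodingPolygon X P ∧
  (∀ Q : IntPolygon, HasRecodingPolygon X Q → P.n ≤ Q.n) ∧
  (∀ Q : IntPolygon, HasRecodingPolygon X Q → Q.n = P.n →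
    Q.carrier ⊆ P.carrier → Q.carrier = P.carrier)

/-!
By compactness, a corner-coding sector at a vertex `w` of `P` already codes `w` from a finite
set `F ⊆ sector \ {w}`. Since `P` lies in the cone at `w`, for large `n` the translate
`F + (n - 1) • w` lies in `n • P \ {n • w}`, and shift invariance of `X` moves the coding to
the vertex `n • w` of `n • P`. Conversely, `P \ {w}` lies in the sector at `w`, and coding is
monotone in the coding set.
-/

open Filter Set
open scoped Pointwise

lemma toR2_injective : Function.Injective toR2 := by
  intro p q h
  simp only [toR2, Prod.ext_iff, Int.cast_inj] at h
  exact Prod.ext h.1 h.2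

lemma toR2_add (p q : Z2) : toR2 (p + q) = toR2 p + toR2 q := by
  simp [toR2]

lemma toR2_sub (p q : Z2) : toR2 (p - q) = toR2 p - toR2 q := by
  simp [toR2]

lemma toR2_smul (m : ℤ) (p : Z2) : toR2 (m • p) = (m : ℝ) • toR2 p := by
  simp [toR2]

lemma crossR_toR2 (u v : Z2) : crossR (toR2 u) (toR2 v) = crossZ u v := by
  simp [crossR, crossZ, toR2]

lemma codes_iff_codesZ {A : Type*} (X : Set (Config A)) (S S' : Set (ℝ × ℝ)) :
    Codes X S S' ↔ CodesZ X (toR2 ⁻¹' S) (toR2 ⁻¹' S') :=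
  Iff.rfl

lemma _root_.Convex.add_smul_add_smul_mem {E : Type*} [AddCommGroup E] [Module ℝ E] {Q : Set E}
    (hQ : Convex ℝ Q) {w a b : E} (hw : w ∈ Q) (ha : w + a ∈ Q) (hb : w + b ∈ Q)
    {s t : ℝ} (hs : 0 ≤ s) (ht : 0 ≤ t) (hst : s + t ≤ 1) : w + s • a + t • b ∈ Q := by
  have hmem := hQ.sum_mem (t := Finset.univ) (w := ![1 - s - t, s, t]) (z := ![w, w + a, w + b])
    (fun k _ => by fin_cases k <;> simp <;> linarith)
    (by simp [Fin.sum_univ_three]; ring) (fun k _ => by fin_cases k <;> simpa)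
  convert hmem using 1
  simp only [Fin.sum_univ_three, Matrix.cons_val_zero, Matrix.cons_val_one, Matrix.cons_val_two,
    Matrix.head_cons, Matrix.tail_cons]
  module

/-- Cramer's rule. -/
lemma eq_crossR_div_smul_add_crossR_div_smul (a b d : ℝ × ℝ) (h : crossR b a ≠ 0) :
    d = (crossR b d / crossR b a) • a + (crossR d a / crossR b a) • b := by
  unfold crossR at *
  ext <;> simp only [Prod.fst_add, Prod.snd_add, Prod.smul_fst, Prod.smul_snd, smul_eq_mul] <;>
    field_simp <;> ring

def apexCone (w a b : ℝ × ℝ) : Set (ℝ × ℝ) :=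
  {q | ∃ s t : ℝ, 0 ≤ s ∧ 0 ≤ t ∧ q = w + s • a + t • b}

lemma convex_apexCone (w a b : ℝ × ℝ) : Convex ℝ (apexCone w a b) := by
  rintro _ ⟨s₁, t₁, hs₁, ht₁, rfl⟩ _ ⟨s₂, t₂, hs₂, ht₂, rfl⟩ θ μ hθ hμ hθμ
  refine ⟨θ * s₁ + μ * s₂, θ * t₁ + μ * t₂, by positivity, by positivity, ?_⟩
  obtain rfl : θ = 1 - μ := by linarith
  module

lemma add_mem_apexCone {w a b d : ℝ × ℝ} (hba : 0 < crossR b a) (hbd : 0 ≤ crossR b d)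
    (hda : 0 ≤ crossR d a) : w + d ∈ apexCone w a b :=
  ⟨_, _, div_nonneg hbd hba.le, div_nonneg hda hba.le, by
    rw [add_assoc, ← eq_crossR_div_smul_add_crossR_div_smul a b d hba.ne']⟩

lemma sub_one_ne_add_one {n : ℕ} (i : Fin (n + 3)) : i - 1 ≠ i + 1 := by
  rw [Ne, sub_eq_iff_eq_add, add_assoc, left_eq_add, Fin.ext_iff, Fin.val_add]
  simp [Nat.mod_eq_of_lt (show 2 < n + 3 by omega)]

namespace IntPolygon

variable (P : IntPolygon)

lemma crossZ_edgeVec_nonneg (i j : Fin (P.n + 3)) :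
    0 ≤ crossZ (P.vert (i + 1) - P.vert i) (P.vert j - P.vert i) := by
  by_cases hji : j = i
  · simp [hji, crossZ]
  by_cases hji' : j = i + 1
  · simp [hji', crossZ, mul_comm]
  exact (P.convex i j hji hji').le

/-- `vertexSector P i` is definitionally `toR2 ⁻¹' P.vertexCone i`. -/
def vertexCone (i : Fin (P.n + 3)) : Set (ℝ × ℝ) :=
  apexCone (toR2 (P.vert i)) (toR2 (P.vert (i - 1) - P.vert i)) (toR2 (P.vert (i + 1) - P.vert i))

lemma vert_mem_vertexCone (i j : Fin (P.n + 3)) : toR2 (P.vert j) ∈ P.vertexCone i := by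
  have hba : 0 < crossZ (P.vert (i + 1) - P.vert i) (P.vert (i - 1) - P.vert i) :=
    P.convex i (i - 1) (by simp) (sub_one_ne_add_one i)
  have hbd := P.crossZ_edgeVec_nonneg i j
  have hda : 0 ≤ crossZ (P.vert j - P.vert i) (P.vert (i - 1) - P.vert i) := by
    have h := P.crossZ_edgeVec_nonneg (i - 1) j
    rw [sub_add_cancel] at h
    convert h using 1
    simp only [crossZ, Prod.fst_sub, Prod.snd_sub]
    ring
  have h := add_mem_apexCone (w := toR2 (P.vert i)) (d := toR2 (P.vert j - P.vert i))
    (by rw [crossR_toR2]; exact_mod_cast hba) (by rw [crossR_toR2]; exact_mod_cast hbd)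
    (by rw [crossR_toR2]; exact_mod_cast hda)
  rwa [← toR2_add, add_sub_cancel] at h

lemma carrier_subset_vertexCone (i : Fin (P.n + 3)) : P.carrier ⊆ P.vertexCone i :=
  convexHull_min (range_subset_iff.2 (P.vert_mem_vertexCone i)) (convex_apexCone _ _ _)

lemma preimage_carrier_diff_subset (i : Fin (P.n + 3)) :
    toR2 ⁻¹' (P.carrier \ {toR2 (P.vert i)}) ⊆ vertexSector P i \ {P.vert i} :=
  fun _ ⟨hp, hne⟩ => ⟨P.carrier_subset_vertexCone i hp, fun h => hne (congrArg toR2 h)⟩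

lemma eventually_vadd_mem_dilate_carrier {i : Fin (P.n + 3)} {f : Z2}
    (hf : f ∈ vertexSector P i) :
    ∀ᶠ n : ℤ in atTop, ∀ hn : 0 < n, toR2 ((n - 1) • P.vert i + f) ∈ (P.dilate n hn).carrier := by
  obtain ⟨s, t, hs, ht, hf⟩ := hf
  filter_upwards [eventually_ge_atTop ⌈s + t⌉] with n hst hn
  have hnR : (0 : ℝ) < n := by exact_mod_cast hn
  have hvert (j : Fin (P.n + 3)) : toR2 (n • P.vert j) ∈ (P.dilate n hn).carrier :=
    subset_convexHull ℝ _ ⟨j, rfl⟩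
  have hedge (j : Fin (P.n + 3)) :
      toR2 (n • P.vert i) + (n : ℝ) • toR2 (P.vert j - P.vert i) ∈ (P.dilate n hn).carrier := by
    convert hvert j using 1
    simp only [toR2_smul, toR2_sub]
    module
  have hconv : Convex ℝ (P.dilate n hn).carrier := convex_convexHull ℝ _
  have key := hconv.add_smul_add_smul_mem (hvert i) (hedge (i - 1))
    (hedge (i + 1)) (div_nonneg hs hnR.le) (div_nonneg ht hnR.le)
    (by rw [← add_div, div_le_one hnR]; exact Int.ceil_le.1 hst)
  convert key using 1
  rw [toR2_add, toR2_smul, toR2_smul, hf, smul_smul, smul_smul, div_mul_cancel₀ _ hnR.ne',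
    div_mul_cancel₀ _ hnR.ne']
  push_cast
  module

end IntPolygon

namespace CodesZ

variable {A : Type*} {X : Set (Config A)} {S S' T T' : Set Z2}

lemma mono (h : CodesZ X S T) (hS : S ⊆ S') (hT : T' ⊆ T) : CodesZ X S' T' :=
  fun x hx x' hx' hag p hp => h x hx x' hx' (fun q hq => hag q (hS hq)) p (hT hp)

lemma vadd (hX : ∀ u : Z2, ∀ x ∈ X, shiftAct u x ∈ X) (h : CodesZ X S T) (u : Z2) :
    CodesZ X (u +ᵥ S) (u +ᵥ T) := by
  rintro x hx x' hx' hag _ ⟨p, hp, rfl⟩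
  exact h _ (hX u x hx) _ (hX u x' hx') (fun q hq => hag _ ⟨q, hq, rfl⟩) p hp

/-- By compactness of `X ×ˢ X`. -/
lemma exists_finite [Finite A] (hX : letI : TopologicalSpace A := ⊥; IsClosed X) {q : Z2}
    (h : CodesZ X S {q}) : ∃ F ⊆ S, F.Finite ∧ CodesZ X F {q} := by
  let : TopologicalSpace A := ⊥
  have : DiscreteTopology A := ⟨rfl⟩
  let differAt (p : Z2) : Set (Config A × Config A) := {z | z.1 p ≠ z.2 p}
  have hclopen (p : Z2) : IsClopen (differAt p) :=
    (isClopen_discrete {ab : A × A | ab.1 ≠ ab.2}).preimage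
      (f := fun z : Config A × Config A => (z.1 p, z.2 p)) (by fun_prop)
  have hK : IsCompact (X ×ˢ X ∩ differAt q) :=
    ((hX.prod hX).inter (hclopen q).isClosed).isCompact
  have hcover : X ×ˢ X ∩ differAt q ⊆ ⋃ p ∈ S, differAt p := by
    rintro ⟨x, x'⟩ ⟨⟨hx, hx'⟩, hne⟩
    by_contra hall
    refine hne (h x hx x' hx' (fun p hp => ?_) q rfl)
    by_contra hp'
    exact hall (mem_iUnion₂.2 ⟨p, hp, hp'⟩)
  obtain ⟨F, hFS, hF, hsub⟩ := hK.elim_finite_subcover_image (fun p _ => (hclopen p).isOpen) hcover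
  refine ⟨F, hFS, hF, ?_⟩
  rintro x hx x' hx' hag _ rfl
  by_contra hne
  obtain ⟨p, hp, hdiff⟩ := mem_iUnion₂.1 (hsub (show (x, x') ∈ _ from ⟨⟨hx, hx'⟩, hne⟩))
  exact hdiff (hag p hp)

end CodesZ

lemma eventually_codes_dilate_vertex {A : Type*} {X : Set (Config A)}
    (hX : ∀ u : Z2, ∀ x ∈ X, shiftAct u x ∈ X) (P : IntPolygon) (i : Fin (P.n + 3))
    {F : Set Z2} (hFS : F ⊆ vertexSector P i \ {P.vert i}) (hF : F.Finite)
    (hcode : CodesZ X F {P.vert i}) :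
    ∀ᶠ n : ℤ in atTop, ∀ hn : 0 < n, Codes X ((P.dilate n hn).carrier \ {toR2 (n • P.vert i)})
      {toR2 (n • P.vert i)} := by
  have hmem := hF.eventually_all.2 fun f hf => P.eventually_vadd_mem_dilate_carrier (hFS hf).1
  filter_upwards [hmem] with n hmem hn
  rw [codes_iff_codesZ]
  refine (hcode.vadd hX ((n - 1) • P.vert i)).mono ?_ ?_
  · rintro _ ⟨f, hf, rfl⟩
    refine ⟨hmem f hf hn, fun h => (hFS hf).2 ?_⟩
    have h : (n - 1) • P.vert i + f = n • P.vert i := toR2_injective h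
    exact (eq_sub_of_add_eq' h).trans (by rw [sub_smul, one_smul, sub_sub_cancel])
  · intro p hp
    rw [vadd_set_singleton, vadd_eq_add, sub_smul, one_smul, sub_add_cancel]
    exact toR2_injective hp

theorem statement8_general {A : Type} [Fintype A] (X : Set (Config A))
    (hX : IsSubshift X) (P : IntPolygon) :
    ((∀ i : Fin (P.n + 3), CodesZ X (vertexSector P i \ {P.vert i}) {P.vert i}) →
      ∃ N : ℤ, ∀ n : ℤ, ∀ hn : 0 < n, N ≤ n → IsCodingPolygon X (P.dilate n hn)) ∧
    (IsCodingPolygon X P →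
      ∀ i : Fin (P.n + 3), CodesZ X (vertexSector P i \ {P.vert i}) {P.vert i}) := by
  refine ⟨fun hcorner => ?_, fun hP i => ?_⟩
  · choose F hFS hF hcode using fun i => (hcorner i).exists_finite hX.1
    obtain ⟨N, hN⟩ := eventually_atTop.1 <| eventually_all.2 fun i =>
      eventually_codes_dilate_vertex hX.2 P i (hFS i) (hF i) (hcode i)
    exact ⟨N, fun n hn hNn i => hN n hNn i hn⟩
  · exact ((codes_iff_codesZ _ _ _).1 (hP i)).mono (P.preimage_carrier_diff_subset i)
      fun _ h => congrArg toR2 h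

/-- if every vertex sector of the convex integer polygon `P` is corner
coding for the infinite subshift `X`, then `n·P` is a coding polygon for `X` for all
sufficiently large positive `n`; conversely, if `P` is a coding polygon for `X` then
every vertex sector of `P` is corner coding for `X`. -/
theorem statement8 {A : Type} [Fintype A] [Nonempty A] (X : Set (Config A))
    (hX : IsSubshift X) (hInf : X.Infinite) (P : IntPolygon) :
    ((∀ i : Fin (P.n + 3), CodesZ X (vertexSector P i \ {P.vert i}) {P.vert i}) →
      ∃ N : ℤ, ∀ n : ℤ, ∀ hn : 0 < n, N ≤ n → IsCodingPolygon X (P.dilate n hn)) ∧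
    (IsCodingPolygon X P →
      ∀ i : Fin (P.n + 3), CodesZ X (vertexSector P i \ {P.vert i}) {P.vert i}) :=
  statement8_general X hX P

end PolygonalShifts
end

section
/- Let X be a ℤ²-subshift and let S be a rational sector that is weakly corner coding for X. Then there exists a recoding Y of X for which S is corner coding. -/
namespace PolygonalShifts

open scoped Pointwise

/-!
Recode `X` by its higher block presentation over the window `W = {0, -c₂, -c₁}`, where
`c₁ ∈ ℕ e₁` and `c₂ ∈ ℕ e₂` lie outside `F₀`. In the coordinates `(crossZ p e₂, crossZ e₁ p)`
the sector `S` is the positive quadrant, and a translate `a + S` with one coordinate of `a`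
nonpositive contains a whole half-strip of `S`; two such translates, one for each coordinate,
leave only a finite part `F` of `S` uncovered. If two points of `X` agree on `W + (S \ {0})`,
then for each `w ∈ W`, translating by `w - c` (with `c = c₁` or `c₂`) yields two points that
agree on `S \ F`, hence, by weak corner coding, at `c`: the original points agree at `w`.
-/

lemma crossZ_self (u : Z2) : crossZ u u = 0 := by
  simp only [crossZ]; ring

lemma crossZ_ne_zero_left {u v : Z2} (h : crossZ u v ≠ 0) : u ≠ 0 := by
  rintro rfl; simp [crossZ] at h

lemma crossZ_ne_zero_right {u v : Z2} (h : crossZ u v ≠ 0) : v ≠ 0 := by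
  rintro rfl; simp [crossZ] at h

lemma toR2_ne_zero {p : Z2} (hp : p ≠ 0) : toR2 p ≠ 0 := by
  contrapose! hp; simpa [toR2, Prod.ext_iff] using hp

/-- The coordinates of `p` in the basis `(e₁, e₂)`, scaled by `crossZ e₁ e₂`. -/
def sectorCoord (e₁ e₂ : Z2) : Z2 →+ ℤ × ℤ :=
  AddMonoidHom.mk' (fun p => (crossZ p e₂, crossZ e₁ p)) fun p q => by
    ext <;> simp only [crossZ, Prod.fst_add, Prod.snd_add] <;> ring

lemma sectorCoord_apply (e₁ e₂ p : Z2) : sectorCoord e₁ e₂ p = (crossZ p e₂, crossZ e₁ p) := rfl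

@[simp]
lemma sectorCoord_left (e₁ e₂ : Z2) : sectorCoord e₁ e₂ e₁ = (crossZ e₁ e₂, 0) := by
  rw [sectorCoord_apply, crossZ_self]

@[simp]
lemma sectorCoord_right (e₁ e₂ : Z2) : sectorCoord e₁ e₂ e₂ = (0, crossZ e₁ e₂) := by
  rw [sectorCoord_apply, crossZ_self]

lemma sectorCoord_injective {e₁ e₂ : Z2} (hκ : crossZ e₁ e₂ ≠ 0) :
    Function.Injective (sectorCoord e₁ e₂) := by
  refine (injective_iff_map_eq_zero _).2 fun p hp => ?_
  simp only [sectorCoord_apply, Prod.mk_eq_zero, crossZ] at hp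
  obtain ⟨h₁, h₂⟩ := hp
  have hp₁ : crossZ e₁ e₂ * p.1 = 0 := by
    simp only [crossZ]; linear_combination e₁.1 * h₁ + e₂.1 * h₂
  have hp₂ : crossZ e₁ e₂ * p.2 = 0 := by
    simp only [crossZ]; linear_combination e₁.2 * h₁ + e₂.2 * h₂
  exact Prod.ext ((mul_eq_zero.1 hp₁).resolve_left hκ) ((mul_eq_zero.1 hp₂).resolve_left hκ)

lemma toR2_eq_crossZ_div_smul_add {e₁ e₂ : Z2} (hκ : crossZ e₁ e₂ ≠ 0) (p : Z2) :
    toR2 p = ((crossZ p e₂ : ℝ) / crossZ e₁ e₂) • toR2 e₁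
      + ((crossZ e₁ p : ℝ) / crossZ e₁ e₂) • toR2 e₂ := by
  have hκ' : (crossZ e₁ e₂ : ℝ) ≠ 0 := by exact_mod_cast hκ
  ext <;> simp only [toR2, Prod.fst_add, Prod.snd_add, Prod.smul_fst, Prod.smul_snd,
    smul_eq_mul] <;> field_simp <;> push_cast [crossZ] <;> ring

lemma cast_crossZ_of_toR2_eq_smul {e p : Z2} {r : ℝ} (hp : r • toR2 e = toR2 p) (q : Z2) :
    (crossZ q p : ℝ) = r * crossZ q e ∧ (crossZ p q : ℝ) = r * crossZ e q := by
  have h₁ : r * e.1 = p.1 := congrArg Prod.fst hp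
  have h₂ : r * e.2 = p.2 := congrArg Prod.snd hp
  push_cast [crossZ]
  constructor <;> rw [← h₁, ← h₂] <;> ring

lemma mem_sectorZ_iff {e₁ e₂ : Z2} (hκ : 0 < crossZ e₁ e₂) {p : Z2} :
    p ∈ SectorZ e₁ e₂ ↔ 0 ≤ sectorCoord e₁ e₂ p := by
  have hκR : (0 : ℝ) < crossZ e₁ e₂ := by exact_mod_cast hκ
  simp only [Prod.le_def, sectorCoord_apply, Prod.fst_zero, Prod.snd_zero]
  constructor
  · rintro (h | h | ⟨h₁, h₂⟩)
    · obtain ⟨r, hr, hp⟩ := h.exists_nonneg_left (toR2_ne_zero (crossZ_ne_zero_left hκ.ne'))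
      obtain ⟨h₁, -⟩ := cast_crossZ_of_toR2_eq_smul hp e₁
      obtain ⟨-, h₂⟩ := cast_crossZ_of_toR2_eq_smul hp e₂
      rw [crossZ_self, Int.cast_zero, mul_zero] at h₁
      constructor
      · exact_mod_cast (show (0 : ℝ) ≤ crossZ p e₂ by rw [h₂]; positivity)
      · exact_mod_cast h₁.ge
    · obtain ⟨r, hr, hp⟩ := h.exists_nonneg_left (toR2_ne_zero (crossZ_ne_zero_right hκ.ne'))
      obtain ⟨h₁, -⟩ := cast_crossZ_of_toR2_eq_smul hp e₁
      obtain ⟨-, h₂⟩ := cast_crossZ_of_toR2_eq_smul hp e₂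
      rw [crossZ_self, Int.cast_zero, mul_zero] at h₂
      constructor
      · exact_mod_cast h₂.ge
      · exact_mod_cast (show (0 : ℝ) ≤ crossZ e₁ p by rw [h₁]; positivity)
    · exact ⟨h₂.le, h₁.le⟩
  · rintro ⟨h₂, h₁⟩
    have hp := toR2_eq_crossZ_div_smul_add hκ.ne' p
    rcases h₁.eq_or_lt with h₁ | h₁
    · rw [← h₁, Int.cast_zero, zero_div, zero_smul, add_zero] at hp
      exact Or.inl (hp ▸ SameRay.sameRay_nonneg_smul_right _ (by positivity))
    rcases h₂.eq_or_lt with h₂ | h₂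
    · rw [← h₂, Int.cast_zero, zero_div, zero_smul, zero_add] at hp
      exact Or.inr (Or.inl (hp ▸ SameRay.sameRay_nonneg_smul_right _ (by positivity)))
    exact Or.inr (Or.inr ⟨h₁, h₂⟩)

lemma finite_sectorZ_diff_vadd {e₁ e₂ : Z2} (hκ : 0 < crossZ e₁ e₂) {a₁ a₂ : Z2}
    (h₁ : (sectorCoord e₁ e₂ a₁).2 ≤ 0) (h₂ : (sectorCoord e₁ e₂ a₂).1 ≤ 0) :
    (SectorZ e₁ e₂ \ ((a₁ +ᵥ (SectorZ e₁ e₂ \ {0})) ∪ (a₂ +ᵥ (SectorZ e₁ e₂ \ {0})))).Finite := by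
  set C := sectorCoord e₁ e₂
  have hbox := (Set.finite_Icc 0 ((C a₁).1, (C a₂).2)).preimage (sectorCoord_injective hκ.ne').injOn
  refine ((hbox.insert a₁).insert a₂).subset ?_
  rintro p ⟨hp, hpa⟩
  simp only [Set.mem_union, Set.mem_vadd_set_iff_neg_vadd_mem, vadd_eq_add, Set.mem_sdiff,
    Set.mem_singleton_iff, neg_add_eq_zero, not_or, not_and_not_right] at hpa
  obtain ⟨hpa₁, hpa₂⟩ := hpa
  by_cases hp₁ : a₁ = p
  · exact Or.inr (Or.inl hp₁.symm)
  by_cases hp₂ : a₂ = p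
  · exact Or.inl hp₂.symm
  refine Or.inr (Or.inr ⟨(mem_sectorZ_iff hκ).1 hp, ?_⟩)
  have hq₁ := mt (mem_sectorZ_iff hκ).2 (mt hpa₁ hp₁)
  have hq₂ := mt (mem_sectorZ_iff hκ).2 (mt hpa₂ hp₂)
  have hp := (mem_sectorZ_iff hκ).1 hp
  simp only [map_add, map_neg, Prod.le_def, Prod.fst_add, Prod.snd_add, Prod.fst_neg,
    Prod.snd_neg, Prod.fst_zero, Prod.snd_zero, sectorCoord_apply, C] at hq₁ hq₂ hp h₁ h₂ ⊢
  omega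

section Codes

variable {A : Type*} {X : Set (Config A)}

lemma CodesZ.mono_s11 {S₁ S₂ T₁ T₂ : Set Z2} (h : CodesZ X S₁ T₁) (hS : S₁ ⊆ S₂) (hT : T₂ ⊆ T₁) :
    CodesZ X S₂ T₂ :=
  fun x hx x' hx' hag p hp => h x hx x' hx' (fun q hq => hag q (hS hq)) p (hT hp)

lemma CodesZ.vadd_s11 (hX : ∀ u : Z2, ∀ x ∈ X, shiftAct u x ∈ X) {S T : Set Z2} (h : CodesZ X S T)
    (v : Z2) : CodesZ X (v +ᵥ S) (v +ᵥ T) := by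
  rintro x hx x' hx' hag _ ⟨p, hp, rfl⟩
  exact h _ (hX v x hx) _ (hX v x' hx') (fun q hq => hag _ ⟨q, hq, rfl⟩) p hp

variable {e₁ e₂ : Z2} {F₀ : Set Z2}

lemma codesZ_sectorZ_diff_of_vadd (hκ : 0 < crossZ e₁ e₂)
    (hF₀ : ∀ F : Set Z2, F.Finite → F ⊆ SectorZ e₁ e₂ →
      CodesZ X (SectorZ e₁ e₂ \ F) (SectorZ e₁ e₂ \ F₀))
    {a₁ a₂ : Z2} (h₁ : (sectorCoord e₁ e₂ a₁).2 ≤ 0) (h₂ : (sectorCoord e₁ e₂ a₂).1 ≤ 0) :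
    CodesZ X ((a₁ +ᵥ (SectorZ e₁ e₂ \ {0})) ∪ (a₂ +ᵥ (SectorZ e₁ e₂ \ {0})))
      (SectorZ e₁ e₂ \ F₀) :=
  (hF₀ _ (finite_sectorZ_diff_vadd hκ h₁ h₂) Set.sdiff_subset).mono_s11
    (fun _ hp => by_contra fun h => hp.2 ⟨hp.1, h⟩) le_rfl

lemma codesZ_singleton_of_mem_sectorZ_diff (hX : ∀ u : Z2, ∀ x ∈ X, shiftAct u x ∈ X)
    (hκ : 0 < crossZ e₁ e₂)
    (hF₀ : ∀ F : Set Z2, F.Finite → F ⊆ SectorZ e₁ e₂ →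
      CodesZ X (SectorZ e₁ e₂ \ F) (SectorZ e₁ e₂ \ F₀))
    {f₁ f₂ w c : Z2} (hc : c ∈ SectorZ e₁ e₂ \ F₀)
    (h₁ : (sectorCoord e₁ e₂ (f₁ - w + c)).2 ≤ 0) (h₂ : (sectorCoord e₁ e₂ (f₂ - w + c)).1 ≤ 0) :
    CodesZ X ((f₁ +ᵥ (SectorZ e₁ e₂ \ {0})) ∪ (f₂ +ᵥ (SectorZ e₁ e₂ \ {0}))) {w} := by
  have hf (f : Z2) : w - c + (f - w + c) = f := by abel
  refine ((codesZ_sectorZ_diff_of_vadd hκ hF₀ h₁ h₂).vadd_s11 hX (w - c)).mono_s11 ?_ ?_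
  · rw [Set.vadd_set_union, vadd_vadd, vadd_vadd, hf, hf]
  · exact Set.singleton_subset_iff.2 ⟨c, hc, sub_add_cancel w c⟩

end Codes

section HigherBlock

variable {A : Type*} (W : Finset Z2)

def higherBlockMap (x : Config A) : Config (W → A) := fun u f => x (f + u)

lemma higherBlockMap_shiftAct (u : Z2) (x : Config A) :
    higherBlockMap W (shiftAct u x) = shiftAct u (higherBlockMap W x) := by
  funext w f
  exact congrArg x (add_left_comm u f w)

lemma higherBlockMap_injective (h0 : (0 : Z2) ∈ W) :
    Function.Injective (higherBlockMap (A := A) W) := by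
  intro x x' h
  funext u
  simpa [higherBlockMap] using congrFun (congrFun h u) ⟨0, h0⟩

lemma higherBlockMap_apply_eq_iff {x x' : Config A} {u : Z2} :
    higherBlockMap W x u = higherBlockMap W x' u ↔ ∀ f ∈ W, x (f + u) = x' (f + u) := by
  simp [funext_iff, higherBlockMap]

lemma continuous_higherBlockMap :
    letI : TopologicalSpace A := ⊥
    letI : TopologicalSpace (W → A) := ⊥
    Continuous (higherBlockMap (A := A) W) := by
  let : TopologicalSpace A := ⊥
  have : DiscreteTopology A := ⟨rfl⟩
  -- `W` is finite, so the product topology on the alphabet `W → A` is the discrete one.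
  have hW : (⊥ : TopologicalSpace (W → A)) = Pi.topologicalSpace := DiscreteTopology.eq_bot.symm
  show @Continuous _ _ _ (@Pi.topologicalSpace Z2 _ fun _ => ⊥) _
  rw [hW]
  exact continuous_pi fun u => continuous_pi fun f => continuous_apply _

variable {X : Set (Config A)}

theorem isSubshift_image_higherBlockMap [Finite A] (hX : IsSubshift X) :
    IsSubshift (higherBlockMap W '' X) := by
  refine ⟨?_, ?_⟩
  · let : TopologicalSpace A := ⊥
    have : DiscreteTopology A := ⟨rfl⟩
    let : TopologicalSpace (W → A) := ⊥
    have : DiscreteTopology (W → A) := ⟨rfl⟩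
    exact (hX.1.isCompact.image (continuous_higherBlockMap W)).isClosed
  · rintro u _ ⟨x, hx, rfl⟩
    exact ⟨_, hX.2 u x hx, higherBlockMap_shiftAct W u x⟩

theorem isRecodingVia_image_higherBlockMap [Finite A] (hX : IsSubshift X) (h0 : (0 : Z2) ∈ W) :
    IsRecodingVia X (higherBlockMap W '' X) W := by
  let : TopologicalSpace A := ⊥
  have : DiscreteTopology A := ⟨rfl⟩
  let : TopologicalSpace (W → A) := ⊥
  have : DiscreteTopology (W → A) := ⟨rfl⟩
  have : CompactSpace X := isCompact_iff_compactSpace.1 hX.1.isCompact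
  refine ⟨Continuous.homeoOfEquivCompactToT2
    (f := Equiv.Set.image _ X (higherBlockMap_injective W h0))
    (((continuous_higherBlockMap W).comp continuous_subtype_val).subtype_mk _), ?_, ?_⟩
  · intro u x x' hxx'
    show higherBlockMap W x'.1 = shiftAct u (higherBlockMap W x.1)
    rw [hxx', higherBlockMap_shiftAct]
  · intro u x x'
    exact higherBlockMap_apply_eq_iff W

theorem CodesZ.image_higherBlockMap {T T' : Set Z2} (h : CodesZ X (↑W + T) (↑W + T')) :
    CodesZ (higherBlockMap W '' X) T T' := by
  rintro _ ⟨x, hx, rfl⟩ _ ⟨x', hx', rfl⟩ hag u hu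
  refine (higherBlockMap_apply_eq_iff W).2 fun f hf => h x hx x' hx' ?_ _ (Set.add_mem_add hf hu)
  rintro _ ⟨g, hg, v, hv, rfl⟩
  exact (higherBlockMap_apply_eq_iff W).1 (hag v hv) g hg

end HigherBlock

lemma exists_mem_sectorZ_diff_sectorCoord_eq {e₁ e₂ : Z2} (hκ : 0 < crossZ e₁ e₂) {F : Set Z2}
    (hF : F.Finite) : ∃ (c₁ c₂ : Z2) (M : ℤ), 0 ≤ M ∧
      c₁ ∈ SectorZ e₁ e₂ \ F ∧ c₂ ∈ SectorZ e₁ e₂ \ F ∧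
      sectorCoord e₁ e₂ c₁ = (M, 0) ∧ sectorCoord e₁ e₂ c₂ = (0, M) := by
  have hinj {e : Z2} (he : e ≠ 0) : Function.Injective fun N : ℕ => (N : ℤ) • e :=
    (smul_left_injective ℤ he).comp Nat.cast_injective
  obtain ⟨N, -, hN⟩ := Set.infinite_univ.exists_notMem_finite
    ((hF.preimage (hinj (crossZ_ne_zero_left hκ.ne')).injOn).union
      (hF.preimage (hinj (crossZ_ne_zero_right hκ.ne')).injOn))
  have hM : 0 ≤ (N : ℤ) * crossZ e₁ e₂ := by positivity
  have hC₁ : sectorCoord e₁ e₂ ((N : ℤ) • e₁) = (N * crossZ e₁ e₂, 0) := by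
    simp only [map_zsmul, sectorCoord_left, Prod.smul_mk, smul_eq_mul, mul_zero]
  have hC₂ : sectorCoord e₁ e₂ ((N : ℤ) • e₂) = (0, N * crossZ e₁ e₂) := by
    simp only [map_zsmul, sectorCoord_right, Prod.smul_mk, smul_eq_mul, mul_zero]
  exact ⟨_, _, _, hM, ⟨(mem_sectorZ_iff hκ).2 (hC₁ ▸ ⟨hM, le_rfl⟩), fun h => hN (Or.inl h)⟩,
    ⟨(mem_sectorZ_iff hκ).2 (hC₂ ▸ ⟨le_rfl, hM⟩), fun h => hN (Or.inr h)⟩, hC₁, hC₂⟩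

theorem statement11_general {A : Type} [Fintype A] (X : Set (Config A))
    (hX : IsSubshift X)
    (e₁ e₂ : Z2) (hor : 0 < crossZ e₁ e₂)
    (hwcc : IsWeaklyCornerCoding X e₁ e₂) :
    ∃ (A' : Type) (_ : Fintype A') (Y : Set (Config A')),
      IsSubshift Y ∧ IsRecoding X Y ∧ IsCornerCoding Y e₁ e₂ := by
  obtain ⟨F₀, hF₀, -, hcode⟩ := hwcc
  obtain ⟨c₁, c₂, M, hM, hc₁, hc₂, hC₁, hC₂⟩ :=
    exists_mem_sectorZ_diff_sectorCoord_eq hor hF₀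
  let W : Finset Z2 := {0, -c₂, -c₁}
  refine ⟨W → A, inferInstance, higherBlockMap W '' X, isSubshift_image_higherBlockMap W hX,
    ⟨W, W.finite_toSet, isRecodingVia_image_higherBlockMap W hX (by simp [W])⟩,
    CodesZ.image_higherBlockMap W ?_⟩
  intro x hx x' hx' hag w hw
  have hcodes : CodesZ X ((-c₂ +ᵥ (SectorZ e₁ e₂ \ {0})) ∪ (-c₁ +ᵥ (SectorZ e₁ e₂ \ {0}))) {w} := by
    simp only [Set.add_singleton, add_zero, Set.image_id', Finset.coe_insert, Finset.coe_singleton,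
      Set.mem_insert_iff, Set.mem_singleton_iff, W] at hw
    rcases hw with rfl | rfl | rfl
    · exact codesZ_singleton_of_mem_sectorZ_diff hX.2 hor hcode hc₁ (by simp [hC₁, hC₂, hM])
        (by simp)
    · exact codesZ_singleton_of_mem_sectorZ_diff hX.2 hor hcode hc₁ (by simp [hC₁])
        (by simp [hC₂])
    · exact codesZ_singleton_of_mem_sectorZ_diff hX.2 hor hcode hc₂ (by simp [hC₁])
        (by simp [hC₂])
  exact hcodes.mono_s11 (Set.union_subset (Set.vadd_set_subset_add (by simp [W]))
    (Set.vadd_set_subset_add (by simp [W]))) le_rfl x hx x' hx' hag w rfl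

/-- a rational sector that is weakly corner coding for `X` is corner
coding for some recoding `Y` of `X`. -/
theorem statement11 {A : Type} [Fintype A] [Nonempty A] (X : Set (Config A))
    (hX : IsSubshift X)
    (e₁ e₂ : Z2) (he₁ : e₁ ≠ 0) (he₂ : e₂ ≠ 0) (hor : 0 < crossZ e₁ e₂)
    (hwcc : IsWeaklyCornerCoding X e₁ e₂) :
    ∃ (A' : Type) (_ : Fintype A') (Y : Set (Config A')),
      IsSubshift Y ∧ IsRecoding X Y ∧ IsCornerCoding Y e₁ e₂ :=
  statement11_general X hX e₁ e₂ hor hwcc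

end PolygonalShifts
end
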